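/- For every c ∈ ℝ, the function f : ℝ → ℝ defined by f(w) = w + λ(c − w), where λ(x) = φ(x)/(1 − Φ(x)) is the standard normal hazard function, is strictly monotone increasing and convex on ℝ. -/

import Mathlib

/-!
Put `x = c - w` and `Φ̄ = 1 - Φ`; then `w + λ(c - w) = c + (λ(x) - x)` and `λ' = λ (λ - x)`, so
monotonicity means `λ' < 1` and convexity means `λ'' = λ ((λ - x) (2λ - x) - 1) > 0`.
After clearing denominators, each of these, like the Mills-ratio bounds
`x Φ̄ < φ` and `x φ < (x² + 1) Φ̄` feeding them, is the sign of an explicit combination of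
`φ`, `Φ̄` and `x` that tends to `0` at `+∞` and whose derivative has a sign fixed by the
previous bounds: a function strictly monotone towards the limit `0` has the opposite sign.
-/

open MeasureTheory ProbabilityTheory

/-- Standard normal density. -/
noncomputable def phi (x : ℝ) : ℝ := (Real.sqrt (2 * Real.pi))⁻¹ * Real.exp (-x ^ 2 / 2)

/-- Standard normal CDF. -/
noncomputable def Phi (x : ℝ) : ℝ := ∫ s in Set.Iic x, phi s

/-- Standard normal hazard function (inverse Mills ratio). -/
noncomputable def lam (x : ℝ) : ℝ := phi x / (1 - Phi x)

/-- Mills-ratio-type function `φ(x)/Φ(x)`. -/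
noncomputable def mills (x : ℝ) : ℝ := phi x / Phi x

open Real Set Filter Topology

theorem StrictAnti.lt_of_tendsto {α β : Type*} [TopologicalSpace α] [Preorder α]
    [OrderClosedTopology α] [LinearOrder β] [NoMaxOrder β] {f : β → α} {a : α}
    (hf : StrictAnti f) (ha : Tendsto f atTop (𝓝 a)) (b : β) : a < f b := by
  obtain ⟨c, hbc⟩ := exists_gt b
  exact (hf.antitone.le_of_tendsto ha c).trans_lt (hf hbc)

theorem StrictMono.lt_of_tendsto {α β : Type*} [TopologicalSpace α] [Preorder α]
    [OrderClosedTopology α] [LinearOrder β] [NoMaxOrder β] {f : β → α} {a : α}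
    (hf : StrictMono f) (ha : Tendsto f atTop (𝓝 a)) (b : β) : f b < a := by
  obtain ⟨c, hbc⟩ := exists_gt b
  exact (hf hbc).trans_le (hf.monotone.ge_of_tendsto ha c)

lemma phi_eq_gaussianPDFReal : phi = gaussianPDFReal 0 1 := by
  ext x
  simp [phi, gaussianPDFReal]

lemma phi_pos (x : ℝ) : 0 < phi x := by
  unfold phi; positivity

lemma continuous_phi : Continuous phi := by
  unfold phi; fun_prop

lemma integrable_phi : Integrable phi := by
  rw [phi_eq_gaussianPDFReal]; exact integrable_gaussianPDFReal 0 1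

lemma integrable_mul_phi : Integrable (fun x => x * phi x) := by
  convert (integrable_mul_exp_neg_mul_sq (b := 1 / 2) (by norm_num)).const_mul (√(2 * π))⁻¹
    using 2 with x
  simp only [phi]; ring_nf

lemma hasDerivAt_phi (x : ℝ) : HasDerivAt phi (-x * phi x) x := by
  have h := (((hasDerivAt_pow 2 x).neg.div_const 2).exp).const_mul (√(2 * π))⁻¹
  exact h.congr_deriv (by simp only [phi, Pi.neg_apply]; ring)

lemma tendsto_mul_phi_atTop : Tendsto (fun x => x * phi x) atTop (𝓝 0) := by
  have h := ((tendsto_rpow_abs_mul_exp_neg_mul_sq_cocompact (a := 1 / 2) (by norm_num) 1).mono_left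
    atTop_le_cocompact).const_mul (√(2 * π))⁻¹
  rw [mul_zero] at h
  refine h.congr' ?_
  filter_upwards [eventually_ge_atTop 0] with x hx
  simp only [phi, rpow_one, abs_of_nonneg hx]
  ring_nf

lemma tendsto_phi_atTop : Tendsto phi atTop (𝓝 0) := by
  refine squeeze_zero' (.of_forall fun x => (phi_pos x).le) ?_ tendsto_mul_phi_atTop
  filter_upwards [eventually_ge_atTop 1] with x hx
  nlinarith [phi_pos x]

noncomputable def Phibar (x : ℝ) : ℝ := 1 - Phi x

lemma lam_eq_phi_div_Phibar (x : ℝ) : lam x = phi x / Phibar x := rfl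

lemma Phibar_eq_integral_Ioi (x : ℝ) : Phibar x = ∫ t in Ioi x, phi t := by
  have h := intervalIntegral.integral_Iic_add_Ioi (b := x) integrable_phi.integrableOn
    integrable_phi.integrableOn
  rw [phi_eq_gaussianPDFReal, integral_gaussianPDFReal_eq_one 0 one_ne_zero] at h
  rw [Phibar, Phi, phi_eq_gaussianPDFReal]
  linarith

lemma Phibar_pos (x : ℝ) : 0 < Phibar x := by
  rw [Phibar_eq_integral_Ioi, setIntegral_pos_iff_support_of_nonneg_ae
    (.of_forall fun t => (phi_pos t).le) integrable_phi.integrableOn]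
  simp [Function.support, (phi_pos _).ne']

lemma hasDerivAt_Phibar (x : ℝ) : HasDerivAt Phibar (-phi x) x := by
  have h : ∀ y, Phibar y = Phibar 0 - ∫ t in (0 : ℝ)..y, phi t := fun y => by
    have := intervalIntegral.integral_Iic_sub_Iic (a := 0) (b := y)
      integrable_phi.integrableOn integrable_phi.integrableOn
    simp only [Phibar, Phi] at this ⊢
    linarith
  rw [funext h]
  exact ((continuous_phi.integral_hasStrictDerivAt 0 x).hasDerivAt).const_sub _

lemma integral_Ioi_mul_phi (x : ℝ) : ∫ t in Ioi x, t * phi t = phi x := by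
  rw [integral_Ioi_of_hasDerivAt_of_tendsto' (f := fun t => -phi t)
    (fun t _ => (hasDerivAt_phi t).neg.congr_deriv (by ring)) integrable_mul_phi.integrableOn
    (by simpa using tendsto_phi_atTop.neg)]
  ring

lemma mul_Phibar_le_phi (x : ℝ) : x * Phibar x ≤ phi x := by
  rw [Phibar_eq_integral_Ioi, ← integral_Ioi_mul_phi x, ← integral_const_mul]
  refine setIntegral_mono_on (integrable_phi.const_mul x).integrableOn
    integrable_mul_phi.integrableOn measurableSet_Ioi fun t ht => ?_
  exact mul_le_mul_of_nonneg_right (le_of_lt ht) (phi_pos t).le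

lemma tendsto_mul_Phibar_atTop : Tendsto (fun x => x * Phibar x) atTop (𝓝 0) := by
  refine squeeze_zero' ?_ ?_ tendsto_phi_atTop
  · filter_upwards [eventually_ge_atTop 0] with x hx
    exact mul_nonneg hx (Phibar_pos x).le
  · exact .of_forall mul_Phibar_le_phi

lemma tendsto_sq_mul_Phibar_atTop : Tendsto (fun x => x ^ 2 * Phibar x) atTop (𝓝 0) := by
  refine squeeze_zero' (.of_forall fun x => mul_nonneg (sq_nonneg x) (Phibar_pos x).le) ?_
    tendsto_mul_phi_atTop
  filter_upwards [eventually_ge_atTop 0] with x hx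
  rw [sq, mul_assoc]
  exact mul_le_mul_of_nonneg_left (mul_Phibar_le_phi x) hx

lemma tendsto_Phibar_atTop : Tendsto Phibar atTop (𝓝 0) := by
  refine squeeze_zero' (.of_forall fun x => (Phibar_pos x).le) ?_ tendsto_mul_Phibar_atTop
  filter_upwards [eventually_ge_atTop 1] with x hx
  nlinarith [Phibar_pos x]

lemma mul_Phibar_lt_phi (x : ℝ) : x * Phibar x < phi x := by
  have hd (y : ℝ) : HasDerivAt (fun y => phi y - y * Phibar y) (-Phibar y) y :=
    ((hasDerivAt_phi y).sub ((hasDerivAt_id' y).mul (hasDerivAt_Phibar y))).congr_deriv (by ring)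
  have hlim : Tendsto (fun y => phi y - y * Phibar y) atTop (𝓝 0) := by
    simpa using tendsto_phi_atTop.sub tendsto_mul_Phibar_atTop
  have := (strictAnti_of_hasDerivAt_neg hd fun y => neg_lt_zero.2 (Phibar_pos y)).lt_of_tendsto
    hlim x
  linarith

lemma mul_phi_lt_sq_add_one_mul_Phibar (x : ℝ) : x * phi x < (x ^ 2 + 1) * Phibar x := by
  have hd (y : ℝ) : HasDerivAt (fun y => (y ^ 2 + 1) * Phibar y - y * phi y)
      (-2 * (phi y - y * Phibar y)) y :=
    ((((hasDerivAt_pow 2 y).add_const 1).mul (hasDerivAt_Phibar y)).sub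
      ((hasDerivAt_id' y).mul (hasDerivAt_phi y))).congr_deriv (by push_cast; ring)
  have hlim : Tendsto (fun y => (y ^ 2 + 1) * Phibar y - y * phi y) atTop (𝓝 0) := by
    simpa [add_mul] using
      (tendsto_sq_mul_Phibar_atTop.add tendsto_Phibar_atTop).sub tendsto_mul_phi_atTop
  have := (strictAnti_of_hasDerivAt_neg hd fun y => by
    nlinarith [mul_Phibar_lt_phi y]).lt_of_tendsto hlim x
  linarith

lemma lam_pos (x : ℝ) : 0 < lam x := div_pos (phi_pos x) (Phibar_pos x)

lemma hasDerivAt_lam (x : ℝ) : HasDerivAt lam (lam x * (lam x - x)) x := by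
  have h := (hasDerivAt_phi x).div (hasDerivAt_Phibar x) (Phibar_pos x).ne'
  refine h.congr_deriv ?_
  rw [lam_eq_phi_div_Phibar]
  field_simp [(Phibar_pos x).ne']
  ring

lemma lam_mul_lam_sub_lt_one (x : ℝ) : lam x * (lam x - x) < 1 := by
  set M := fun y => phi y ^ 2 - y * phi y * Phibar y - Phibar y ^ 2
  have hd (y : ℝ) : HasDerivAt M (phi y * ((y ^ 2 + 1) * Phibar y - y * phi y)) y :=
    ((((hasDerivAt_phi y).pow 2).sub (((hasDerivAt_id' y).mul (hasDerivAt_phi y)).mul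
      (hasDerivAt_Phibar y))).sub ((hasDerivAt_Phibar y).pow 2)).congr_deriv
      (by simp only [Pi.mul_apply]; push_cast; ring)
  have hlim : Tendsto M atTop (𝓝 0) := by
    simpa using ((tendsto_phi_atTop.pow 2).sub (tendsto_mul_phi_atTop.mul tendsto_Phibar_atTop)).sub
      (tendsto_Phibar_atTop.pow 2)
  have hM := (strictMono_of_hasDerivAt_pos hd fun y => mul_pos (phi_pos y)
    (sub_pos.2 (mul_phi_lt_sq_add_one_mul_Phibar y))).lt_of_tendsto hlim x
  have : lam x * (lam x - x) - 1 = M x / Phibar x ^ 2 := by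
    rw [lam_eq_phi_div_Phibar]
    field_simp [(Phibar_pos x).ne']
    ring
  linarith [div_neg_of_neg_of_pos hM (pow_pos (Phibar_pos x) 2)]

-- `Q = (Φ̄² / φ) q` for `q := (λ - x) (2λ - x) - 1`: `Φ̄² / φ` is the integrating factor of the
-- linear ODE `q' = (2λ - x) q - (λ - x) (1 - x (λ - x))`, so `Q' < 0` by the two Mills bounds.
lemma one_lt_lam_sub_mul_two_mul_lam_sub (x : ℝ) : 1 < (lam x - x) * (2 * lam x - x) := by
  set Q := fun y => 2 * phi y - 3 * y * Phibar y + (y ^ 2 - 1) * Phibar y ^ 2 / phi y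
  have hd (y : ℝ) : HasDerivAt Q
      (-((phi y - y * Phibar y) * ((y ^ 2 + 1) * Phibar y - y * phi y) / phi y)) y := by
    have h := (((hasDerivAt_phi y).const_mul 2).sub (((hasDerivAt_id' y).const_mul 3).mul
      (hasDerivAt_Phibar y))).add ((((hasDerivAt_pow 2 y).sub_const 1).mul
      ((hasDerivAt_Phibar y).pow 2)).div (hasDerivAt_phi y) (phi_pos y).ne')
    refine h.congr_deriv ?_
    simp only [Pi.mul_apply, Pi.pow_apply]
    field_simp [(phi_pos y).ne']
    push_cast
    ring
  have hlim : Tendsto Q atTop (𝓝 0) := by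
    have h3 : Tendsto (fun y => (y ^ 2 - 1) * Phibar y ^ 2 / phi y) atTop (𝓝 0) := by
      refine squeeze_zero' ?_ ?_ tendsto_mul_Phibar_atTop
      · filter_upwards [eventually_ge_atTop 1] with y hy
        have : 0 ≤ y ^ 2 - 1 := by nlinarith
        exact div_nonneg (mul_nonneg this (sq_nonneg _)) (phi_pos y).le
      · filter_upwards [eventually_ge_atTop 1] with y hy
        rw [div_le_iff₀ (phi_pos y)]
        nlinarith [mul_le_mul_of_nonneg_left (mul_Phibar_le_phi y)
          (mul_nonneg (by linarith : (0 : ℝ) ≤ y) (Phibar_pos y).le), sq_nonneg (Phibar y)]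
    have h := ((tendsto_phi_atTop.const_mul 2).sub (tendsto_mul_Phibar_atTop.const_mul 3)).add h3
    rw [mul_zero, mul_zero, sub_zero, add_zero] at h
    exact h.congr fun y => by simp only [Q]; ring
  have hQ := (strictAnti_of_hasDerivAt_neg hd fun y => neg_neg_of_pos (div_pos
    (mul_pos (sub_pos.2 (mul_Phibar_lt_phi y)) (sub_pos.2 (mul_phi_lt_sq_add_one_mul_Phibar y)))
    (phi_pos y))).lt_of_tendsto hlim x
  have : (lam x - x) * (2 * lam x - x) - 1 = phi x * Q x / Phibar x ^ 2 := by
    simp only [Q, lam_eq_phi_div_Phibar]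
    field_simp [(Phibar_pos x).ne', (phi_pos x).ne']
    ring
  linarith [div_pos (mul_pos (phi_pos x) hQ) (pow_pos (Phibar_pos x) 2)]

lemma hasDerivAt_lam_mul_lam_sub (x : ℝ) : HasDerivAt (fun y => lam y * (lam y - y))
    (lam x * ((lam x - x) * (2 * lam x - x) - 1)) x :=
  ((hasDerivAt_lam x).mul ((hasDerivAt_lam x).sub (hasDerivAt_id' x))).congr_deriv
    (by simp only [Pi.sub_apply]; ring)

lemma strictMono_lam_mul_lam_sub : StrictMono fun x => lam x * (lam x - x) :=
  strictMono_of_hasDerivAt_pos hasDerivAt_lam_mul_lam_sub fun x =>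
    mul_pos (lam_pos x) (sub_pos.2 (one_lt_lam_sub_mul_two_mul_lam_sub x))

/-- for every `c`, `w ↦ w + λ(c − w)` is strictly increasing and convex. -/
theorem stmt_18 (c : ℝ) :
    StrictMono (fun w => w + lam (c - w)) ∧ ConvexOn ℝ Set.univ (fun w => w + lam (c - w)) := by
  have hf (w : ℝ) : HasDerivAt (fun w => w + lam (c - w))
      (1 - lam (c - w) * (lam (c - w) - (c - w))) w :=
    ((hasDerivAt_id' w).add ((hasDerivAt_lam (c - w)).comp w
      ((hasDerivAt_id' w).const_sub c))).congr_deriv (by ring)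
  refine ⟨strictMono_of_hasDerivAt_pos hf fun w => sub_pos.2 (lam_mul_lam_sub_lt_one _), ?_⟩
  refine Monotone.convexOn_univ_of_deriv (fun w => (hf w).differentiableAt) ?_
  rw [funext fun w => (hf w).deriv]
  intro a b hab
  have := strictMono_lam_mul_lam_sub.monotone (sub_le_sub_left hab c)
  simp only at this ⊢
  linarith
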